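/- Let n, m, p be positive integers and let q ∈ 𝒫_m(ℂⁿ) be a homogeneous polynomial of degree m on ℂⁿ. Then there exist uniquely determined polynomials q_{m−2kp} ∈ ℋ^p_{m−2kp}(ℂⁿ) (homogeneous of degree m−2kp and polyharmonic of order p), for k = 0, 1, …, ⌊m/(2p)⌋, such that q(x) = Σ_{k=0}^{⌊m/(2p)⌋} |x|^{2kp} q_{m−2kp}(x) for all x ∈ ℂⁿ. -/

import Mathlib

open MeasureTheory Complex Filter Finset Metric
open scoped ENNReal Topology

noncomputable section

/-- `ℂⁿ` -/
abbrev Cn (n : ℕ) := Fin n → ℂ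

/-- `ℝⁿ` with the euclidean norm -/
abbrev Rn (n : ℕ) := EuclideanSpace ℝ (Fin n)

/-- embedding of `ℝⁿ` into `ℂⁿ` -/
def toC {n : ℕ} (x : Rn n) : Cn n := fun j => (x j : ℂ)

/-- `|z|² = ∑ zⱼ²`, the complex-bilinear extension of the squared euclidean norm -/
def cnsq {n : ℕ} (z : Cn n) : ℂ := ∑ j, (z j) ^ 2

/-- the bilinear dot product `z ⬝ w = ∑ zⱼ wⱼ` -/
def cdot {n : ℕ} (z w : Cn n) : ℂ := ∑ j, z j * w j

/-- componentwise complex conjugation -/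
def conjC {n : ℕ} (z : Cn n) : Cn n := fun j => (starRingEnd ℂ) (z j)

/-- the hermitian norm `‖z‖ = (∑ |zⱼ|²)^(1/2)` on `ℂⁿ` -/
def hnorm {n : ℕ} (z : Cn n) : ℝ := Real.sqrt (∑ j, ‖z j‖ ^ 2)

/-- the principal square root `|z| = (∑ zⱼ²)^(1/2)`, complex extension of the euclidean norm -/
def cnorm {n : ℕ} (z : Cn n) : ℂ := cnsq z ^ ((1 : ℂ)/2)

/-- `Ŝ_p = ⋃_{k<p} e^{kπi/p} S`, union of rotated unit spheres -/
def Shat (n p : ℕ) : Set (Cn n) :=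
  {z | ∃ k < p, ∃ x : Rn n, ‖x‖ = 1 ∧ z = Complex.exp (k * Real.pi * Complex.I / p) • toC x}

/-- `B̂_p = ⋃_{k<p} e^{kπi/p} B`, union of rotated open unit balls -/
def Bhat (n p : ℕ) : Set (Cn n) :=
  {z | ∃ k < p, ∃ x : Rn n, ‖x‖ < 1 ∧ z = Complex.exp (k * Real.pi * Complex.I / p) • toC x}

/-- the complexified Laplacian on polynomials, `Δ = ∑ ∂²/∂xⱼ²` -/
def lapP (n : ℕ) : MvPolynomial (Fin n) ℂ →ₗ[ℂ] MvPolynomial (Fin n) ℂ :=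
  ∑ j : Fin n, ((MvPolynomial.pderiv j).toLinearMap ∘ₗ (MvPolynomial.pderiv j).toLinearMap)

/-- the polynomial `|x|² = ∑ xⱼ²` -/
def nsqPoly (n : ℕ) : MvPolynomial (Fin n) ℂ := ∑ j : Fin n, (MvPolynomial.X j) ^ 2

/-- `ℋ_m^p(ℂⁿ)`: homogeneous polynomials of degree `m` that are polyharmonic of order `p` -/
def Hmp (n m p : ℕ) : Submodule ℂ (MvPolynomial (Fin n) ℂ) :=
  MvPolynomial.homogeneousSubmodule (Fin n) ℂ m ⊓ LinearMap.ker ((lapP n) ^ p)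

/-- the normalised surface-area measure `σ` on the unit sphere `S ⊂ ℝⁿ` -/
def sphMeasure (n : ℕ) : Measure (sphere (0 : Rn n) 1) :=
  ((volume : Measure (Rn n)).toSphere Set.univ)⁻¹ • (volume : Measure (Rn n)).toSphere

/-- the inner product `⟨f,g⟩_{Ŝ_p} = (1/p) ∫_S ∑_j f(e^{jπi/p}ζ) conj(g(e^{jπi/p}ζ)) dσ(ζ)` -/
def innerShat (n p : ℕ) (f g : Cn n → ℂ) : ℂ :=
  (p : ℂ)⁻¹ * ∫ ζ : sphere (0 : Rn n) 1, ∑ j ∈ Finset.range p,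
      f (Complex.exp (j * Real.pi * Complex.I / p) • toC (ζ : Rn n)) *
        (starRingEnd ℂ) (g (Complex.exp (j * Real.pi * Complex.I / p) • toC (ζ : Rn n)))
    ∂(sphMeasure n)

/-- the measure on `ℂⁿ` representing `L²(Ŝ_p)`: the average of the `p` rotated copies of `σ` -/
def muShat (n p : ℕ) : Measure (Cn n) :=
  (p : ℝ≥0∞)⁻¹ • ∑ j ∈ Finset.range p,
    Measure.map (fun ζ : sphere (0 : Rn n) 1 =>
      Complex.exp (j * Real.pi * Complex.I / p) • toC (ζ : Rn n)) (sphMeasure n)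

/-- the Poisson kernel `P_p(x,ζ) = (1-|x|^{2p})/(x²ζ̄² - 2x⬝ζ̄ + 1)^{n/2}` for `B̂_p` -/
def PoissonK (n p : ℕ) (x ζ : Cn n) : ℂ :=
  (1 - (cnsq x) ^ p) / (cnsq x * cnsq (conjC ζ) - 2 * cdot x (conjC ζ) + 1) ^ ((n : ℂ)/2)

/-- the Poisson integral `P_p[f](x) = ⟨f, P_p(·,x)⟩_{Ŝ_p}` -/
def PInt (n p : ℕ) (f : Cn n → ℂ) (x : Cn n) : ℂ :=
  innerShat n p f (fun ζ => PoissonK n p ζ x)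

/-- the complexified Laplacian, through the real parametrisation of a rotated ball -/
def lapRe (n : ℕ) (g : Rn n → ℂ) : Rn n → ℂ := fun y =>
  ∑ j : Fin n, fderiv ℝ (fun z => fderiv ℝ g z (EuclideanSpace.single j 1)) y
    (EuclideanSpace.single j 1)

/-- the `L`-functional: `L(z) = sqrt(‖z‖² + sqrt(‖z‖⁴ - |z²|²))` -/
def Lnorm {n : ℕ} (z : Cn n) : ℝ :=
  Real.sqrt (hnorm z ^ 2 + Real.sqrt (hnorm z ^ 4 - ‖cnsq z‖ ^ 2))

/-- the Lie ball `LB` -/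
def LBall (n : ℕ) : Set (Cn n) := {z | Lnorm z < 1}

/-- the Lie sphere `LS` -/
def LSphere (n : ℕ) : Set (Cn n) :=
  {z | ∃ φ : ℝ, ∃ x : Rn n, ‖x‖ = 1 ∧ z = Complex.exp (φ * Complex.I) • toC x}

/-- the Cauchy-Hua kernel `H(z,w) = (w̄²z² - 2w̄⬝z + 1)^{-n/2}` -/
def Hua (n : ℕ) (z w : Cn n) : ℂ :=
  (cnsq (conjC w) * cnsq z - 2 * cdot (conjC w) z + 1) ^ (-(n : ℂ)/2)

/-- the Gegenbauer polynomial `C_m^λ(t)` -/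
def gegen (lam : ℂ) (m : ℕ) (t : ℂ) : ℂ :=
  ∑ k ∈ Finset.range (m / 2 + 1),
    (-1) ^ k * Complex.Gamma ((m : ℂ) + lam - k) /
      ((Nat.factorial k : ℂ) * (Nat.factorial (m - 2 * k) : ℂ) * Complex.Gamma lam) *
      (2 * t) ^ (m - 2 * k)

/-! For the Fischer inner product `⟨f, g⟩ = ∑_α α! f_α conj(g_α)` the derivative `∂ⱼ` is adjoint
to multiplication by `xⱼ`, so `Δ` is adjoint to multiplication by `|x|²`. Hence
`⟨Δᵖ(|x|²ᵖ r), r⟩ = ⟨|x|²ᵖ r, |x|²ᵖ r⟩`, so `r ↦ Δᵖ(|x|²ᵖ r)` is injective, and therefore bijective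
on each (finite-dimensional) space of homogeneous polynomials of a fixed degree. Consequently a
homogeneous `q` of degree `m ≥ 2p` splits uniquely as `h + |x|²ᵖ r` with `Δᵖ h = 0` and `r`
homogeneous of degree `m - 2p`, and iterating on `r` gives the decomposition. When `m < 2p`,
`⟨Δᵖ q, Δᵖ q⟩ = ⟨q, |x|²ᵖ Δᵖ q⟩` vanishes for degree reasons, so `q` is already polyharmonic. -/

namespace MvPolynomial

open Finset

section Fischer

variable {σ : Type*} [Fintype σ]

def fischerInner (f g : MvPolynomial σ ℂ) : ℂ :=
  ∑ α ∈ f.support, (∏ i, ((α i).factorial : ℂ)) * coeff α f * starRingEnd ℂ (coeff α g)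

lemma fischerInner_eq_sum_of_support_subset {f g : MvPolynomial σ ℂ} {s : Finset (σ →₀ ℕ)}
    (hs : f.support ⊆ s) :
    fischerInner f g =
      ∑ α ∈ s, (∏ i, ((α i).factorial : ℂ)) * coeff α f * starRingEnd ℂ (coeff α g) := by
  refine sum_subset hs fun α _ hα => ?_
  rw [notMem_support_iff.mp hα, mul_zero, zero_mul]

lemma fischerInner_add_left (f₁ f₂ g : MvPolynomial σ ℂ) :
    fischerInner (f₁ + f₂) g = fischerInner f₁ g + fischerInner f₂ g := by
  classical
  rw [fischerInner_eq_sum_of_support_subset support_add,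
    fischerInner_eq_sum_of_support_subset (subset_union_left (s₂ := f₂.support)),
    fischerInner_eq_sum_of_support_subset (subset_union_right (s₁ := f₁.support)),
    ← sum_add_distrib]
  simp only [coeff_add, mul_add, add_mul]

lemma fischerInner_sum_left {ι : Type*} (s : Finset ι) (f : ι → MvPolynomial σ ℂ)
    (g : MvPolynomial σ ℂ) : fischerInner (∑ i ∈ s, f i) g = ∑ i ∈ s, fischerInner (f i) g :=
  map_sum (AddMonoidHom.mk' (fischerInner · g) (fischerInner_add_left · · g)) f s

lemma fischerInner_sum_right {ι : Type*} (s : Finset ι) (f : MvPolynomial σ ℂ)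
    (g : ι → MvPolynomial σ ℂ) : fischerInner f (∑ i ∈ s, g i) = ∑ i ∈ s, fischerInner f (g i) := by
  simp only [fischerInner, coeff_sum, map_sum, mul_sum]
  exact sum_comm

lemma fischerInner_monomial_left (α : σ →₀ ℕ) (a : ℂ) (g : MvPolynomial σ ℂ) :
    fischerInner (monomial α a) g =
      (∏ i, ((α i).factorial : ℂ)) * a * starRingEnd ℂ (coeff α g) := by
  classical
  rw [fischerInner_eq_sum_of_support_subset support_monomial_subset, sum_singleton,
    coeff_monomial, if_pos rfl]

lemma eq_zero_of_fischerInner_self_eq_zero {f : MvPolynomial σ ℂ} (h : fischerInner f f = 0) :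
    f = 0 := by
  have hre : fischerInner f f =
      ((∑ α ∈ f.support, (∏ i, ((α i).factorial : ℝ)) * Complex.normSq (coeff α f) : ℝ) : ℂ) := by
    push_cast
    simp only [fischerInner, mul_assoc, Complex.mul_conj]
  rw [hre, Complex.ofReal_eq_zero,
    sum_eq_zero_iff_of_nonneg fun α _ => mul_nonneg (by positivity) (Complex.normSq_nonneg _)] at h
  ext α
  by_contra hα
  have hpos : 0 < (∏ i, ((α i).factorial : ℝ)) * Complex.normSq (coeff α f) :=
    mul_pos (by positivity) (Complex.normSq_pos.mpr hα)
  exact hpos.ne' (h α (mem_support_iff.mpr hα))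

lemma fischerInner_eq_zero_of_isHomogeneous {f g : MvPolynomial σ ℂ} {a b : ℕ}
    (hf : f.IsHomogeneous a) (hg : g.IsHomogeneous b) (hab : a ≠ b) : fischerInner f g = 0 := by
  refine sum_eq_zero fun α hα => ?_
  have hα : α.degree = a := by
    rw [Finsupp.degree_eq_weight_one]; exact hf (mem_support_iff.mp hα)
  rw [hg.coeff_eq_zero (hα ▸ hab), map_zero, mul_zero]

variable [DecidableEq σ]

lemma prod_factorial_sub_single_mul {α : σ →₀ ℕ} {j : σ} (h : α j ≠ 0) :
    (∏ i, ((α - Finsupp.single j 1 : σ →₀ ℕ) i).factorial) * α j = ∏ i, (α i).factorial := by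
  rw [← mul_prod_erase univ _ (mem_univ j), ← mul_prod_erase univ _ (mem_univ j),
    mul_right_comm, Finsupp.tsub_apply, Finsupp.single_eq_same, mul_comm _ (α j),
    Nat.mul_factorial_pred h]
  congr 1
  refine prod_congr rfl fun i hi => ?_
  rw [Finsupp.tsub_apply, Finsupp.single_eq_of_ne (ne_of_mem_erase hi), tsub_zero]

lemma fischerInner_pderiv_left (j : σ) (f g : MvPolynomial σ ℂ) :
    fischerInner (pderiv j f) g = fischerInner f (X j * g) := by
  induction f using induction_on' with
  | add f₁ f₂ h₁ h₂ => rw [map_add, fischerInner_add_left, fischerInner_add_left, h₁, h₂]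
  | monomial α a =>
    rw [pderiv_monomial, fischerInner_monomial_left, fischerInner_monomial_left, mul_comm (X j),
      coeff_mul_X']
    by_cases h : α j = 0
    · simp [h]
    · have hfact := congrArg (Nat.cast (R := ℂ)) (prod_factorial_sub_single_mul h)
      simp only [Nat.cast_mul, Nat.cast_prod] at hfact
      rw [if_pos (Finsupp.mem_support_iff.mpr h), ← hfact]
      ring

end Fischer

end MvPolynomial

open MvPolynomial

section Polyharmonic

variable {n : ℕ}

lemma mem_Hmp_iff {m p : ℕ} {f : MvPolynomial (Fin n) ℂ} :
    f ∈ Hmp n m p ↔ f.IsHomogeneous m ∧ (lapP n ^ p) f = 0 := by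
  rw [Hmp, Submodule.mem_inf, mem_homogeneousSubmodule, LinearMap.mem_ker]

lemma lapP_apply (f : MvPolynomial (Fin n) ℂ) : lapP n f = ∑ j, pderiv j (pderiv j f) := by
  simp [lapP, LinearMap.sum_apply]

lemma fischerInner_lapP_left (f g : MvPolynomial (Fin n) ℂ) :
    fischerInner (lapP n f) g = fischerInner f (nsqPoly n * g) := by
  simp only [lapP_apply, fischerInner_sum_left, fischerInner_pderiv_left, nsqPoly, sum_mul,
    fischerInner_sum_right, pow_two, mul_assoc]

lemma fischerInner_lapP_pow_left (p : ℕ) (f g : MvPolynomial (Fin n) ℂ) :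
    fischerInner ((lapP n ^ p) f) g = fischerInner f (nsqPoly n ^ p * g) := by
  induction p generalizing f with
  | zero => simp
  | succ p ih =>
    rw [pow_succ, Module.End.mul_apply, ih, fischerInner_lapP_left, pow_succ, mul_assoc,
      mul_left_comm]

lemma isHomogeneous_lapP {f : MvPolynomial (Fin n) ℂ} {m : ℕ}
    (hf : f.IsHomogeneous m) : (lapP n f).IsHomogeneous (m - 2) := by
  rw [lapP_apply]
  exact IsHomogeneous.sum _ _ _ fun j _ => hf.pderiv.pderiv

lemma isHomogeneous_lapP_pow {f : MvPolynomial (Fin n) ℂ} {m : ℕ}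
    (hf : f.IsHomogeneous m) (p : ℕ) : ((lapP n ^ p) f).IsHomogeneous (m - 2 * p) := by
  induction p with
  | zero => simpa using hf
  | succ p ih =>
    rw [pow_succ', Module.End.mul_apply]
    simpa only [Nat.sub_sub, mul_add_one] using isHomogeneous_lapP ih

lemma isHomogeneous_nsqPoly : (nsqPoly n).IsHomogeneous 2 :=
  IsHomogeneous.sum _ _ _ fun j _ => by simpa using (isHomogeneous_X ℂ j).pow 2

lemma isHomogeneous_nsqPoly_pow_mul {f : MvPolynomial (Fin n) ℂ} {d : ℕ}
    (hf : f.IsHomogeneous d) (p : ℕ) : (nsqPoly n ^ p * f).IsHomogeneous (2 * p + d) :=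
  (isHomogeneous_nsqPoly.pow p).mul hf

lemma nsqPoly_ne_zero (hn : 0 < n) : nsqPoly n ≠ 0 := fun h => by
  simpa [nsqPoly, hn.ne'] using congrArg (eval fun _ => (1 : ℂ)) h

lemma lapP_pow_eq_zero_of_lt {f : MvPolynomial (Fin n) ℂ} {m p : ℕ} (hf : f.IsHomogeneous m)
    (hm : m < 2 * p) : (lapP n ^ p) f = 0 := by
  apply eq_zero_of_fischerInner_self_eq_zero
  rw [fischerInner_lapP_pow_left]
  exact fischerInner_eq_zero_of_isHomogeneous hf
    (isHomogeneous_nsqPoly_pow_mul (isHomogeneous_lapP_pow hf p) p) (by omega)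

lemma lapP_pow_nsqPoly_pow_mul_injective (hn : 0 < n) (p : ℕ) :
    Function.Injective fun r : MvPolynomial (Fin n) ℂ => (lapP n ^ p) (nsqPoly n ^ p * r) := by
  intro a b hab
  have hzero : (lapP n ^ p) (nsqPoly n ^ p * (a - b)) = 0 := by
    rw [mul_sub, map_sub, sub_eq_zero]
    exact hab
  have hself : fischerInner (nsqPoly n ^ p * (a - b)) (nsqPoly n ^ p * (a - b)) = 0 := by
    rw [← fischerInner_lapP_pow_left, hzero]
    simp [fischerInner]
  have hmul := eq_zero_of_fischerInner_self_eq_zero hself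
  exact sub_eq_zero.mp ((mul_eq_zero.mp hmul).resolve_left (pow_ne_zero p (nsqPoly_ne_zero hn)))

lemma exists_isHomogeneous_lapP_pow_nsqPoly_pow_mul_eq (hn : 0 < n) (p : ℕ) {d : ℕ}
    {g : MvPolynomial (Fin n) ℂ} (hg : g.IsHomogeneous d) :
    ∃ r : MvPolynomial (Fin n) ℂ, r.IsHomogeneous d ∧ (lapP n ^ p) (nsqPoly n ^ p * r) = g := by
  let V := homogeneousSubmodule (Fin n) ℂ d
  have : Module.Finite ℂ V := Module.Finite.iff_fg.mpr (homogeneousSubmodule_fg _ _ d)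
  let Φ := (lapP n ^ p) ∘ₗ LinearMap.mulLeft ℂ (nsqPoly n ^ p)
  have hΦ : ∀ r ∈ V, Φ r ∈ V := fun r hr => (mem_homogeneousSubmodule _ _).mpr <| by
    simpa [Φ] using isHomogeneous_lapP_pow (isHomogeneous_nsqPoly_pow_mul hr p) p
  have hinj : Function.Injective (Φ.restrict hΦ) := fun a b hab =>
    Subtype.ext (lapP_pow_nsqPoly_pow_mul_injective hn p (congrArg Subtype.val hab))
  obtain ⟨r, hr⟩ := LinearMap.injective_iff_surjective.mp hinj ⟨g, hg⟩
  exact ⟨r, r.2, congrArg Subtype.val hr⟩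

lemma eq_and_eq_of_add_nsqPoly_pow_mul_eq (hn : 0 < n) {p : ℕ}
    {h h' r r' : MvPolynomial (Fin n) ℂ}
    (hh : (lapP n ^ p) h = 0) (hh' : (lapP n ^ p) h' = 0)
    (heq : h + nsqPoly n ^ p * r = h' + nsqPoly n ^ p * r') : h = h' ∧ r = r' := by
  obtain rfl : r = r' := lapP_pow_nsqPoly_pow_mul_injective hn p <| by
    simpa [hh, hh'] using congrArg (lapP n ^ p) heq
  exact ⟨add_right_cancel heq, rfl⟩

lemma sum_fin_succ_nsqPoly_pow_mul (p N : ℕ) (v : Fin (N + 1) → MvPolynomial (Fin n) ℂ) :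
    ∑ k : Fin (N + 1), nsqPoly n ^ ((k : ℕ) * p) * v k
      = v 0 + nsqPoly n ^ p * ∑ i : Fin N, nsqPoly n ^ ((i : ℕ) * p) * v i.succ := by
  rw [Fin.sum_univ_succ, mul_sum]
  simp only [Fin.val_zero, zero_mul, pow_zero, one_mul, Fin.val_succ, add_one_mul, pow_add]
  exact congrArg _ (sum_congr rfl fun i _ => by ring)

lemma sum_nsqPoly_pow_mul_injective (hn : 0 < n) (p : ℕ) {N : ℕ}
    {v w : Fin (N + 1) → MvPolynomial (Fin n) ℂ}
    (hv : ∀ k, (lapP n ^ p) (v k) = 0) (hw : ∀ k, (lapP n ^ p) (w k) = 0)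
    (h : ∑ k : Fin (N + 1), nsqPoly n ^ ((k : ℕ) * p) * v k =
      ∑ k : Fin (N + 1), nsqPoly n ^ ((k : ℕ) * p) * w k) :
    v = w := by
  induction N with
  | zero =>
    funext k
    simpa [Fin.fin_one_eq_zero k] using h
  | succ N ih =>
    rw [sum_fin_succ_nsqPoly_pow_mul p _ v, sum_fin_succ_nsqPoly_pow_mul p _ w] at h
    obtain ⟨h0, htail⟩ := eq_and_eq_of_add_nsqPoly_pow_mul_eq hn (hv 0) (hw 0) h
    have hsucc := ih (fun i => hv i.succ) (fun i => hw i.succ) htail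
    exact funext (Fin.cases h0 (congrFun hsucc))

lemma exists_sum_nsqPoly_pow_mul_eq (hn : 0 < n) {p : ℕ} (hp : 0 < p) (m : ℕ)
    {q : MvPolynomial (Fin n) ℂ} (hq : q.IsHomogeneous m) :
    ∃ v : Fin (m / (2 * p) + 1) → MvPolynomial (Fin n) ℂ,
      (∀ k : Fin (m / (2 * p) + 1), v k ∈ Hmp n (m - 2 * (k : ℕ) * p) p) ∧
        q = ∑ k : Fin (m / (2 * p) + 1), nsqPoly n ^ ((k : ℕ) * p) * v k := by
  induction m using Nat.strong_induction_on generalizing q with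
  | _ m ih =>
    rcases lt_or_ge m (2 * p) with hlt | hle
    · rw [Nat.div_eq_of_lt hlt]
      refine ⟨fun _ => q, fun k => ?_, by simp⟩
      simpa [Fin.fin_one_eq_zero k, mem_Hmp_iff] using ⟨hq, lapP_pow_eq_zero_of_lt hq hlt⟩
    · obtain ⟨r, hr, hΔr⟩ := exists_isHomogeneous_lapP_pow_nsqPoly_pow_mul_eq hn p
        (isHomogeneous_lapP_pow hq p)
      obtain ⟨w, hw, hrw⟩ := ih (m - 2 * p) (by omega) hr
      rw [Nat.div_eq_sub_div (by omega) hle]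
      refine ⟨Fin.cons (q - nsqPoly n ^ p * r) w, Fin.forall_fin_succ.mpr ⟨?_, fun i => ?_⟩, ?_⟩
      · rw [Fin.cons_zero, mem_Hmp_iff, Fin.val_zero, mul_zero, zero_mul, Nat.sub_zero, map_sub,
          hΔr, sub_self]
        refine ⟨hq.sub ?_, rfl⟩
        simpa [Nat.add_sub_cancel' hle] using isHomogeneous_nsqPoly_pow_mul hr p
      · rw [Fin.cons_succ, Fin.val_succ, show 2 * (i + 1 : ℕ) * p = 2 * p + 2 * i * p by ring,
          ← Nat.sub_sub]
        exact hw i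
      · rw [sum_fin_succ_nsqPoly_pow_mul]
        simp only [Fin.cons_zero, Fin.cons_succ, ← hrw, sub_add_cancel]

end Polyharmonic

theorem poly_iterated_decomposition_general (n m p : ℕ) (hn : 0 < n) (hp : 0 < p)
    (q : MvPolynomial (Fin n) ℂ) (hq : q.IsHomogeneous m) :
    ∃! v : Fin (m / (2 * p) + 1) → MvPolynomial (Fin n) ℂ,
      (∀ k : Fin (m / (2 * p) + 1), v k ∈ Hmp n (m - 2 * (k : ℕ) * p) p) ∧
        q = ∑ k : Fin (m / (2 * p) + 1), nsqPoly n ^ ((k : ℕ) * p) * v k := by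
  obtain ⟨v, hv, hqv⟩ := exists_sum_nsqPoly_pow_mul_eq hn hp m hq
  refine ⟨v, ⟨hv, hqv⟩, fun w ⟨hw, hqw⟩ => ?_⟩
  exact sum_nsqPoly_pow_mul_injective hn p (fun k => (mem_Hmp_iff.mp (hw k)).2)
    (fun k => (mem_Hmp_iff.mp (hv k)).2) (hqw.symm.trans hqv)

/-- iterated decomposition of a homogeneous polynomial into polyharmonic pieces. -/
theorem poly_iterated_decomposition (n m p : ℕ) (hn : 0 < n) (hm : 0 < m) (hp : 0 < p)
    (q : MvPolynomial (Fin n) ℂ) (hq : q.IsHomogeneous m) :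
    ∃! v : Fin (m / (2 * p) + 1) → MvPolynomial (Fin n) ℂ,
      (∀ k : Fin (m / (2 * p) + 1), v k ∈ Hmp n (m - 2 * (k : ℕ) * p) p) ∧
        q = ∑ k : Fin (m / (2 * p) + 1), nsqPoly n ^ ((k : ℕ) * p) * v k :=
  poly_iterated_decomposition_general n m p hn hp q hq

end
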